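/- Let S ⊆ ℝ^n be defined by symmetric polynomials of degree at most d ≤ n, let x ∈ S, let a = (p_1(x), ..., p_d(x)), and suppose x' ∈ ℝ^n lies in the Vandermonde variety V(a) and V(a) ∩ W_c is connected (nonempty). If moreover x, x' both lie in the canonical Weyl chamber W_c, then x and x' lie in the same connected component of S ∩ W_c. -/

import Mathlib

/-!
A symmetric polynomial of total degree at most `d` is a polynomial in the elementary symmetric
polynomials `e_1, …, e_d` (the leading-term induction of the fundamental theorem, keeping track of
degrees), and by Newton's identities the values of `e_1, …, e_d` at a point are determined by those
of the power sums `p_1, …, p_d`. Hence every polynomial defining `S` is constant on `V(a)`, so the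
connected set `V(a) ∩ W_c`, which contains `x` and `x'`, lies in `S ∩ W_c`.
-/

theorem Fin.sum_accumulate (n : ℕ) (t : Fin n → ℕ) :
    ∑ j, Fin.accumulate n n t j = ∑ i : Fin n, ((i : ℕ) + 1) * t i := by
  simp only [Fin.accumulate_apply, Finset.sum_filter]
  rw [Finset.sum_comm]
  refine Finset.sum_congr rfl fun i _ => ?_
  have : Finset.univ.filter (fun j : Fin n => (j : ℕ) ≤ i) = Finset.Iic i := by
    ext j
    simp only [Finset.mem_filter, Finset.mem_univ, true_and, Finset.mem_Iic, Fin.le_def]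
  rw [← Finset.sum_filter, this, Finset.sum_const, Fin.card_Iic, smul_eq_mul]

namespace MvPolynomial

open Finset AddMonoidAlgebra

theorem isHomogeneous_esymm (σ R : Type*) [Fintype σ] [CommSemiring R] (k : ℕ) :
    (esymm σ R k).IsHomogeneous k := by
  refine IsHomogeneous.sum _ _ _ fun t ht => ?_
  simpa [(mem_powersetCard.mp ht).2] using
    IsHomogeneous.prod t (fun i => X i) (fun _ => 1) fun i _ => isHomogeneous_X R i

theorem map_esymm_eq_of_map_psum_eq {σ R S : Type*} [Fintype σ] [CommRing R] [CommRing S]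
    [IsDomain S] [CharZero S] (φ ψ : MvPolynomial σ R →+* S) {d : ℕ}
    (h : ∀ k ∈ Set.Icc 1 d, φ (psum σ R k) = ψ (psum σ R k)) :
    ∀ k ≤ d, φ (esymm σ R k) = ψ (esymm σ R k) := by
  intro k
  induction k using Nat.strong_induction_on with
  | _ k ih =>
  intro hkd
  obtain rfl | hk := Nat.eq_zero_or_pos k
  · simp [esymm_zero]
  have hnewton := congrArg (fun q => φ q - ψ q) (mul_esymm_eq_sum σ R k)
  have hterms :
      ∑ a ∈ antidiagonal k with a.1 < k, (-1) ^ a.1 * φ (esymm σ R a.1) * φ (psum σ R a.2) =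
        ∑ a ∈ antidiagonal k with a.1 < k, (-1) ^ a.1 * ψ (esymm σ R a.1) * ψ (psum σ R a.2) := by
    refine sum_congr rfl fun a ha => ?_
    obtain ⟨hak, hlt⟩ := mem_filter.mp ha
    rw [HasAntidiagonal.mem_antidiagonal] at hak
    rw [ih a.1 hlt (by omega), h a.2 ⟨by omega, by omega⟩]
  simp only [map_mul, map_pow, map_neg, map_one, map_natCast, map_sum, ← mul_sub, hterms,
    sub_self] at hnewton
  exact sub_eq_zero.mp <| (mul_eq_zero.mp hnewton).resolve_left (Nat.cast_ne_zero.mpr hk.ne')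

variable {σ R : Type*} [CommRing R] {n d : ℕ}

section

variable [Fintype σ]

theorem esymmAlgHomMonomial_eq_prod (t : Fin n →₀ ℕ) (r : R) :
    esymmAlgHomMonomial σ t r = C r * ∏ i ∈ t.support, esymm σ R (i + 1) ^ t i := by
  rw [esymmAlgHomMonomial, esymmAlgHom_apply, aeval_monomial, algebraMap_eq]
  rfl

theorem totalDegree_esymmAlgHomMonomial_le (t : Fin n →₀ ℕ) (r : R) :
    (esymmAlgHomMonomial σ t r).totalDegree ≤ ∑ i : Fin n, ((i : ℕ) + 1) * t i := by
  rw [esymmAlgHomMonomial_eq_prod]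
  refine (totalDegree_mul _ _).trans ?_
  rw [totalDegree_C, zero_add]
  refine (totalDegree_finsetProd _ _).trans <|
    le_trans ?_ (sum_le_sum_of_subset t.support.subset_univ)
  refine sum_le_sum fun i _ => (totalDegree_pow _ _).trans ?_
  rw [mul_comm]
  exact Nat.mul_le_mul_right _ (isHomogeneous_esymm σ R _).totalDegree_le

theorem esymmAlgHomMonomial_mem_adjoin {t : Fin n →₀ ℕ}
    (ht : ∑ i : Fin n, ((i : ℕ) + 1) * t i ≤ d) (r : R) :
    esymmAlgHomMonomial σ t r ∈ Algebra.adjoin R (esymm σ R '' Set.Icc 1 d) := by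
  rw [esymmAlgHomMonomial_eq_prod]
  refine Subalgebra.mul_mem _ (Subalgebra.algebraMap_mem _ r) <|
    Subalgebra.prod_mem _ fun i hi => Subalgebra.pow_mem _ (Algebra.subset_adjoin ?_) _
  have hti : 1 ≤ t i := Nat.one_le_iff_ne_zero.mpr (Finsupp.mem_support_iff.mp hi)
  refine ⟨i + 1, ⟨le_add_self, ?_⟩, rfl⟩
  calc (i : ℕ) + 1 ≤ ((i : ℕ) + 1) * t i := Nat.le_mul_of_pos_right _ hti
    _ ≤ ∑ j : Fin n, ((j : ℕ) + 1) * t j :=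
        single_le_sum (f := fun j : Fin n => ((j : ℕ) + 1) * t j) (fun _ _ => Nat.zero_le _)
          (mem_univ i)
    _ ≤ d := ht

end

theorem IsSymmetric.exists_esymmAlgHomMonomial_supDegree_eq {p : MvPolynomial (Fin n) R}
    (hp : p.IsSymmetric) (h0 : p ≠ 0) :
    ∃ t : Fin n →₀ ℕ, ∑ i : Fin n, ((i : ℕ) + 1) * t i ≤ p.totalDegree ∧
      (esymmAlgHomMonomial (Fin n) t (p.leadingCoeff toLex)).supDegree toLex =
        p.supDegree toLex := by
  have hlc : p.leadingCoeff toLex ≠ 0 := by rwa [Ne, leadingCoeff_eq_zero toLex.injective]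
  set e := ofLex (p.supDegree toLex)
  have he : e ∈ p.support := by rwa [mem_support_iff, ← leadingCoeff_toLex]
  let t := Finsupp.equivFunOnFinite.symm (Fin.invAccumulate n n e)
  have hacc : Fin.accumulate n n t = e := by
    simpa [t] using Fin.accumulate_invAccumulate le_rfl hp.antitone_supDegree
  refine ⟨t, ?_, ?_⟩
  · calc ∑ i : Fin n, ((i : ℕ) + 1) * t i = ∑ j, e j := by rw [← Fin.sum_accumulate, hacc]
      _ = e.sum fun _ k => k := (Finsupp.sum_fintype e (fun _ k => k) fun _ => rfl).symm
      _ ≤ p.totalDegree := le_totalDegree he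
  · rw [← ofLex_inj, DFunLike.ext'_iff, supDegree_esymmAlgHomMonomial hlc t le_rfl, hacc]

theorem IsSymmetric.mem_adjoin_esymm {p : MvPolynomial (Fin n) R} (hp : p.IsSymmetric)
    (hdeg : p.totalDegree ≤ d) : p ∈ Algebra.adjoin R (esymm (Fin n) R '' Set.Icc 1 d) := by
  induction hsup : p.supDegree toLex using WellFoundedLT.induction generalizing p with | _ u ih
  obtain rfl | h0 := eq_or_ne p 0
  · exact Subalgebra.zero_mem _
  obtain ⟨t, ht, hsupdeg⟩ := hp.exists_esymmAlgHomMonomial_supDegree_eq h0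
  set m := esymmAlgHomMonomial (Fin n) t (p.leadingCoeff toLex)
  have hm : m ∈ Algebra.adjoin R (esymm (Fin n) R '' Set.Icc 1 d) :=
    esymmAlgHomMonomial_mem_adjoin (ht.trans hdeg) _
  obtain hpm | hne := eq_or_ne p m
  · exact hpm ▸ hm
  have hlt : (p - m).supDegree toLex < u := hsup ▸
    (supDegree_sub_lt_of_leadingCoeff_eq toLex.injective hsupdeg.symm
      (leadingCoeff_esymmAlgHomMonomial t le_rfl).symm).resolve_right hne
  have hmdeg : m.totalDegree ≤ d :=
    (totalDegree_esymmAlgHomMonomial_le t _).trans (ht.trans hdeg)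
  rw [← sub_add_cancel p m]
  exact Subalgebra.add_mem _ (ih _ hlt (hp.sub (isSymmetric_esymmAlgHomMonomial _ _))
    ((totalDegree_sub _ _).trans (max_le hdeg hmdeg)) rfl) hm

theorem IsSymmetric.map_eq_of_map_psum_eq {S : Type*} [CommRing S] [IsDomain S] [CharZero S]
    [Algebra R S] (φ ψ : MvPolynomial (Fin n) R →ₐ[R] S)
    (h : ∀ k ∈ Set.Icc 1 d, φ (psum (Fin n) R k) = ψ (psum (Fin n) R k))
    {p : MvPolynomial (Fin n) R} (hp : p.IsSymmetric) (hdeg : p.totalDegree ≤ d) : φ p = ψ p := by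
  refine AlgHom.eqOn_adjoin_iff.mpr ?_ (hp.mem_adjoin_esymm hdeg)
  rintro _ ⟨k, hk, rfl⟩
  exact map_esymm_eq_of_map_psum_eq (φ : MvPolynomial (Fin n) R →+* S) ψ h k hk.2

end MvPolynomial

open MvPolynomial

theorem stmt3_general (n d s : ℕ) (f : Fin s → MvPolynomial (Fin n) ℝ)
    (hsym : ∀ i, (f i).IsSymmetric) (hdeg : ∀ i, (f i).totalDegree ≤ d)
    (S : Set (Fin n → ℝ)) (hS : S = {x | ∀ i, 0 ≤ eval x (f i)})
    (Wc : Set (Fin n → ℝ))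
    (a : Fin d → ℝ) (x x' : Fin n → ℝ)
    (hx : x ∈ S) (ha : ∀ i : Fin d, ∑ j, x j ^ ((i : ℕ) + 1) = a i)
    (hx' : ∀ i : Fin d, ∑ j, x' j ^ ((i : ℕ) + 1) = a i)
    (hconn : IsConnected ({z | ∀ i : Fin d, ∑ j, z j ^ ((i : ℕ) + 1) = a i} ∩ Wc))
    (hxW : x ∈ Wc) (hx'W : x' ∈ Wc) :
    x' ∈ connectedComponentIn (S ∩ Wc) x := by
  have hpsum : ∀ z : Fin n → ℝ, (∀ i : Fin d, ∑ j, z j ^ ((i : ℕ) + 1) = a i) →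
      ∀ k ∈ Set.Icc 1 d, aeval z (psum (Fin n) ℝ k) = aeval x (psum (Fin n) ℝ k) := by
    rintro z hz k ⟨hk1, hkd⟩
    obtain ⟨i, rfl⟩ : ∃ i : Fin d, (i : ℕ) + 1 = k := ⟨⟨k - 1, by omega⟩, by simp only; omega⟩
    simp [psum, hz, ha]
  have hsub : {z | ∀ i : Fin d, ∑ j, z j ^ ((i : ℕ) + 1) = a i} ∩ Wc ⊆ S ∩ Wc := by
    rintro z ⟨hz, hzW⟩
    subst hS
    refine ⟨fun i => ?_, hzW⟩
    calc (0 : ℝ) ≤ eval x (f i) := hx i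
      _ = eval z (f i) :=
        ((hsym i).map_eq_of_map_psum_eq (aeval z) (aeval x) (hpsum z hz) (hdeg i)).symm
  exact hconn.isPreconnected.subset_connectedComponentIn ⟨ha, hxW⟩ hsub ⟨hx', hx'W⟩

theorem stmt3 (n d s : ℕ) (hd : d ≤ n) (f : Fin s → MvPolynomial (Fin n) ℝ)
    (hsym : ∀ i, (f i).IsSymmetric) (hdeg : ∀ i, (f i).totalDegree ≤ d)
    (S : Set (Fin n → ℝ)) (hS : S = {x | ∀ i, 0 ≤ eval x (f i)})
    (Wc : Set (Fin n → ℝ)) (hW : Wc = {x | Monotone x})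
    (a : Fin d → ℝ) (x x' : Fin n → ℝ)
    (hx : x ∈ S) (ha : ∀ i : Fin d, ∑ j, x j ^ ((i : ℕ) + 1) = a i)
    (hx' : ∀ i : Fin d, ∑ j, x' j ^ ((i : ℕ) + 1) = a i)
    (hconn : IsConnected ({z | ∀ i : Fin d, ∑ j, z j ^ ((i : ℕ) + 1) = a i} ∩ Wc))
    (hxW : x ∈ Wc) (hx'W : x' ∈ Wc) :
    x' ∈ connectedComponentIn (S ∩ Wc) x :=
  stmt3_general n d s f hsym hdeg S hS Wc a x x' hx ha hx' hconn hxW hx'W
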